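/- Let C be a geodesic metric space, let E be a metric space with distance d_E, and let ι : E → C satisfy dist (ι e) (ι e') ≤ d_E e e' for all e, e' ∈ E (the inclusion is 1-Lipschitz). Let k₁ > 0 and k₃ > 0 and assume: (i) the image of ι is k₁-dense in C, i.e. for every c ∈ C there is e ∈ E with dist (ι e) c ≤ k₁; (ii) for all e, e' ∈ E with dist (ι e) (ι e') ≤ 3k₁ one has d_E e e' ≤ k₃. Then for all e, e' ∈ E, d_E e e' ≤ (k₃/k₁) · dist (ι e) (ι e') + k₃. In particular ι is a quasi-isometry from E onto C. -/

import Mathlib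

/-!
Cut a geodesic from `ι e` to `ι e'` into pieces of length about `k₁`. Stepping back `2k₁`
from `ι e'` along the geodesic and choosing a `k₁`-close point of `ι E` gives `e''` with
`dist (ι e'') (ι e') ≤ 3k₁` and `dist (ι e) (ι e'') ≤ dist (ι e) (ι e') - k₁`; by induction,
images at distance at most `(n + 1)k₁` come from points at distance at most `(n + 1)k₃`.
-/

open Set

lemma exists_dist_eq_of_mem_Icc_of_geodesic {C : Type*} [PseudoMetricSpace C] {x y : C}
    (hgeo : ∃ f : ℝ → C, f 0 = x ∧ f (dist x y) = y ∧
      ∀ s ∈ Icc (0 : ℝ) (dist x y), ∀ t ∈ Icc (0 : ℝ) (dist x y), dist (f s) (f t) = |s - t|)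
    {s : ℝ} (hs : s ∈ Icc 0 (dist x y)) :
    ∃ z, dist x z = s ∧ dist z y = dist x y - s := by
  obtain ⟨f, hf0, hfy, hf⟩ := hgeo
  have h0 : (0 : ℝ) ∈ Icc 0 (dist x y) := ⟨le_rfl, dist_nonneg⟩
  have hy : dist x y ∈ Icc 0 (dist x y) := ⟨dist_nonneg, le_rfl⟩
  refine ⟨f s, ?_, ?_⟩
  · rw [← hf0, hf 0 h0 s hs, abs_sub_comm, abs_of_nonneg (by linarith [hs.1]), sub_zero]
  · rw [← hfy, hf s hs _ hy, hfy, abs_sub_comm, abs_of_nonneg (by linarith [hs.2])]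

lemma le_div_mul_add_of_forall_nat {a b k₁ k₃ : ℝ} (ha : 0 ≤ a) (hk₁ : 0 < k₁) (hk₃ : 0 ≤ k₃)
    (h : ∀ n : ℕ, a ≤ (n + 1) * k₁ → b ≤ (n + 1) * k₃) :
    b ≤ k₃ / k₁ * a + k₃ := by
  set n := ⌊a / k₁⌋₊
  have hn : (n : ℝ) ≤ a / k₁ := Nat.floor_le (by positivity)
  have ha_le : a ≤ (n + 1) * k₁ := by
    rw [← div_le_iff₀ hk₁]; exact (Nat.lt_floor_add_one _).le
  calc b ≤ (n + 1) * k₃ := h n ha_le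
    _ ≤ a / k₁ * k₃ + k₃ := by nlinarith
    _ = k₃ / k₁ * a + k₃ := by ring

section CoarseEmbedding

variable {C E : Type*} [PseudoMetricSpace C] [PseudoMetricSpace E]
  (hgeo : ∀ x y : C, ∃ f : ℝ → C, f 0 = x ∧ f (dist x y) = y ∧
    ∀ s ∈ Icc (0 : ℝ) (dist x y), ∀ t ∈ Icc (0 : ℝ) (dist x y), dist (f s) (f t) = |s - t|)
  {ι : E → C} {k₁ k₃ : ℝ}
  (hdense : ∀ c : C, ∃ e : E, dist (ι e) c ≤ k₁)
  (hloc : ∀ e e' : E, dist (ι e) (ι e') ≤ 3 * k₁ → dist e e' ≤ k₃)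
include hgeo hdense hloc

lemma exists_dist_image_le_sub_of_three_mul_lt {e e' : E}
    (hfar : 3 * k₁ < dist (ι e) (ι e')) :
    ∃ e'', dist (ι e) (ι e'') ≤ dist (ι e) (ι e') - k₁ ∧ dist e'' e' ≤ k₃ := by
  obtain ⟨_, hk₁⟩ := hdense (ι e)
  replace hk₁ : 0 ≤ k₁ := dist_nonneg.trans hk₁
  obtain ⟨z, hxz, hzy⟩ := exists_dist_eq_of_mem_Icc_of_geodesic (hgeo (ι e) (ι e'))
    (s := dist (ι e) (ι e') - 2 * k₁) ⟨by linarith, by linarith⟩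
  obtain ⟨e'', he''⟩ := hdense z
  refine ⟨e'', ?_, hloc _ _ ?_⟩
  · linarith [dist_triangle (ι e) z (ι e''), dist_comm (ι e'') z]
  · linarith [dist_triangle (ι e'') z (ι e')]

lemma dist_le_mul_of_dist_image_le_mul (n : ℕ) {e e' : E}
    (h : dist (ι e) (ι e') ≤ (n + 1) * k₁) : dist e e' ≤ (n + 1) * k₃ := by
  obtain ⟨_, hk₁⟩ := hdense (ι e)
  replace hk₁ : 0 ≤ k₁ := dist_nonneg.trans hk₁
  have hk₃ : 0 ≤ k₃ := dist_nonneg.trans (hloc e e (by simpa using hk₁))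
  induction n generalizing e' with
  | zero => simpa using hloc e e' (by push_cast at h; linarith)
  | succ n ih =>
    by_cases hfar : 3 * k₁ < dist (ι e) (ι e')
    · obtain ⟨e'', hclose, hlast⟩ :=
        exists_dist_image_le_sub_of_three_mul_lt hgeo hdense hloc hfar
      have hfirst := ih (e' := e'') (by push_cast at h; linarith)
      push_cast
      linarith [dist_triangle e e'' e']
    · push_cast
      nlinarith [hloc e e' (not_lt.mp hfar), Nat.cast_nonneg (α := ℝ) n]

end CoarseEmbedding

theorem stmt_6_general {C E : Type*} [MetricSpace C] [MetricSpace E]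
    (hgeo : ∀ x y : C, ∃ f : ℝ → C, f 0 = x ∧ f (dist x y) = y ∧
      ∀ s ∈ Set.Icc (0 : ℝ) (dist x y), ∀ t ∈ Set.Icc (0 : ℝ) (dist x y),
        dist (f s) (f t) = |s - t|)
    (ι : E → C)
    (k₁ k₃ : ℝ) (hk₁ : 0 < k₁)
    (hdense : ∀ c : C, ∃ e : E, dist (ι e) c ≤ k₁)
    (hloc : ∀ e e' : E, dist (ι e) (ι e') ≤ 3 * k₁ → dist e e' ≤ k₃) :
    ∀ e e' : E, dist e e' ≤ (k₃ / k₁) * dist (ι e) (ι e') + k₃ := by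
  intro e e'
  have hk₃ : 0 ≤ k₃ := dist_nonneg.trans (hloc e e (by simpa using hk₁.le))
  exact le_div_mul_add_of_forall_nat dist_nonneg hk₁ hk₃
    fun n => dist_le_mul_of_dist_image_le_mul hgeo hdense hloc n

/-- Let `C` be a geodesic metric space, `E` a metric space, and `ι : E → C` a
`1`-Lipschitz map whose image is `k₁`-dense in `C`, and such that any two points of `E`
whose images are at distance at most `3k₁` are at distance at most `k₃` in `E`.
Then `d_E e e' ≤ (k₃/k₁) · dist (ι e) (ι e') + k₃` for all `e, e'`; in particular
`ι` is a quasi-isometry from `E` onto `C`. -/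
theorem stmt_6 {C E : Type*} [MetricSpace C] [MetricSpace E]
    (hgeo : ∀ x y : C, ∃ f : ℝ → C, f 0 = x ∧ f (dist x y) = y ∧
      ∀ s ∈ Set.Icc (0 : ℝ) (dist x y), ∀ t ∈ Set.Icc (0 : ℝ) (dist x y),
        dist (f s) (f t) = |s - t|)
    (ι : E → C) (hlip : ∀ e e' : E, dist (ι e) (ι e') ≤ dist e e')
    (k₁ k₃ : ℝ) (hk₁ : 0 < k₁) (hk₃ : 0 < k₃)
    (hdense : ∀ c : C, ∃ e : E, dist (ι e) c ≤ k₁)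
    (hloc : ∀ e e' : E, dist (ι e) (ι e') ≤ 3 * k₁ → dist e e' ≤ k₃) :
    ∀ e e' : E, dist e e' ≤ (k₃ / k₁) * dist (ι e) (ι e') + k₃ :=
  stmt_6_general hgeo ι k₁ k₃ hk₁ hdense hloc
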